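/- Let P = N(0,1) and Q = N(μ,1) be one-dimensional Gaussians with μ ≥ 0. Then for every measurable set E with Q(E) ≤ α, it holds that P(E) ≤ 1 - Φ(Φ^{-1}(1-α) - μ); equivalently, the blow-up function of (P,Q) at level α equals 1 - Φ(Φ^{-1}(1-α) - μ), with the supremum attained by a half-line threshold set. -/

import Mathlib

/-!
Neyman–Pearson. `N(0,1)` has density `r x = exp ((x - μ)² / 2 - x² / 2)` with respect to
`N(μ,1)`, and for `μ ≥ 0` this likelihood ratio is antitone. So on a left half-line `A` we have
`r ≥ k` and off it `r ≤ k`, with `k = r τ`; replacing `E \ A` by `A \ E`, which has at least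
the same `Q`-mass when `Q E ≤ Q A`, then cannot decrease the `P`-mass. The half-line `Iic τ`
with `Q (Iic τ) = α`, i.e. `τ = μ - Φ⁻¹(1 - α)`, has `P`-mass `Φ τ = 1 - Φ (Φ⁻¹(1 - α) - μ)`.
-/

open MeasureTheory ProbabilityTheory Set

/-- Standard normal CDF. -/
noncomputable def Phi : ℝ → ℝ := fun x => ProbabilityTheory.cdf (gaussianReal 0 1) x

/-- Inverse of the standard normal CDF. -/
noncomputable def PhiInv : ℝ → ℝ := Function.invFun Phi

/-- Blow-up function `B_{(P,Q)}(α) = sup {P(E) : Q(E) ≤ α}`. -/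
noncomputable def blowUp {Ω : Type*} [MeasurableSpace Ω] (P Q : Measure Ω) (α : ℝ) : ℝ :=
  sSup {x : ℝ | ∃ E : Set Ω, MeasurableSet E ∧ (Q E).toReal ≤ α ∧ x = (P E).toReal}

open scoped ENNReal NNReal

theorem neymanPearson_withDensity_le {α : Type*} [MeasurableSpace α] {Q : Measure α}
    [IsFiniteMeasure Q] {r : α → ℝ≥0∞} {k : ℝ≥0∞} {A E : Set α}
    (hA : MeasurableSet A) (hE : MeasurableSet E)
    (hrA : ∀ x ∈ A, k ≤ r x) (hrAc : ∀ x ∉ A, r x ≤ k) (hQ : Q E ≤ Q A) :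
    Q.withDensity r E ≤ Q.withDensity r A := by
  have hQdiff : Q (E \ A) ≤ Q (A \ E) := by
    rw [← measure_inter_add_sdiff E hA, ← measure_inter_add_sdiff A hE, inter_comm] at hQ
    exact (ENNReal.add_le_add_iff_left (measure_ne_top Q _)).1 hQ
  rw [← measure_inter_add_sdiff E hA, ← measure_inter_add_sdiff A hE, inter_comm]
  refine add_le_add_right ?_ _
  calc Q.withDensity r (E \ A) = ∫⁻ x in E \ A, r x ∂Q := withDensity_apply _ (hE.diff hA)
    _ ≤ ∫⁻ _ in E \ A, k ∂Q := setLIntegral_mono' (hE.diff hA) fun x hx ↦ hrAc x hx.2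
    _ = k * Q (E \ A) := setLIntegral_const _ _
    _ ≤ k * Q (A \ E) := by gcongr
    _ = ∫⁻ _ in A \ E, k ∂Q := (setLIntegral_const _ _).symm
    _ ≤ ∫⁻ x in A \ E, r x ∂Q := setLIntegral_mono' (hA.diff hE) fun x hx ↦ hrA x hx.1
    _ = Q.withDensity r (A \ E) := (withDensity_apply _ (hA.diff hE)).symm

lemma gaussianPDFReal_eq_exp_mul (a b : ℝ) (v : ℝ≥0) (x : ℝ) :
    gaussianPDFReal a v x =
      Real.exp (((x - b) ^ 2 - (x - a) ^ 2) / (2 * v)) * gaussianPDFReal b v x := by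
  simp only [gaussianPDFReal]
  rw [mul_left_comm, ← Real.exp_add]
  ring_nf

lemma gaussianReal_eq_withDensity (a b : ℝ) {v : ℝ≥0} (hv : v ≠ 0) :
    gaussianReal a v = (gaussianReal b v).withDensity
      fun x ↦ ENNReal.ofReal (Real.exp (((x - b) ^ 2 - (x - a) ^ 2) / (2 * v))) := by
  rw [gaussianReal_of_var_ne_zero _ hv, gaussianReal_of_var_ne_zero _ hv,
    ← withDensity_mul _ (measurable_gaussianPDF _ _) (by fun_prop)]
  congr 1
  ext x
  rw [Pi.mul_apply, gaussianPDF, gaussianPDF, ← ENNReal.ofReal_mul (gaussianPDFReal_nonneg _ _ _),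
    mul_comm, gaussianPDFReal_eq_exp_mul a b]

lemma gaussianReal_le_gaussianReal_Iic {a b : ℝ} (hab : a ≤ b) {v : ℝ≥0} (hv : v ≠ 0) (τ : ℝ)
    {E : Set ℝ} (hE : MeasurableSet E) (hQ : gaussianReal b v E ≤ gaussianReal b v (Iic τ)) :
    gaussianReal a v E ≤ gaussianReal a v (Iic τ) := by
  set r : ℝ → ℝ≥0∞ := fun x ↦ ENNReal.ofReal (Real.exp (((x - b) ^ 2 - (x - a) ^ 2) / (2 * v)))
  -- the likelihood ratio `r` is antitone since `(x - b)² - (x - a)² = (a - b) (2x - a - b)`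
  have hr : Antitone r := by
    intro x y hxy
    refine ENNReal.ofReal_le_ofReal (Real.exp_le_exp.2 ?_)
    exact div_le_div_of_nonneg_right (by nlinarith) (by positivity)
  rw [gaussianReal_eq_withDensity a b hv]
  exact neymanPearson_withDensity_le measurableSet_Iic hE (fun x hx ↦ hr hx)
    (fun x hx ↦ hr (not_le.1 hx).le) hQ

lemma continuous_cdf (ν : Measure ℝ) [IsProbabilityMeasure ν] [NullSingletonClass ν] :
    Continuous (cdf ν) := by
  refine continuous_iff_continuousAt.2 fun x ↦ ?_
  have hx : (cdf ν).measure {x} = 0 := by rw [measure_cdf]; exact measure_singleton x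
  rw [StieltjesFunction.measure_singleton, ENNReal.ofReal_eq_zero, sub_nonpos] at hx
  rw [(cdf ν).mono.continuousAt_iff_leftLim_eq_rightLim, StieltjesFunction.rightLim_eq]
  exact le_antisymm ((cdf ν).mono.leftLim_le le_rfl) hx

lemma exists_cdf_eq (ν : Measure ℝ) [IsProbabilityMeasure ν] [NullSingletonClass ν] {y : ℝ}
    (hy : y ∈ Ioo (0 : ℝ) 1) : ∃ x, cdf ν x = y := by
  obtain ⟨a, ha⟩ := ((tendsto_cdf_atBot ν).eventually_lt_const hy.1).exists
  obtain ⟨b, hb⟩ := ((tendsto_cdf_atTop ν).eventually_const_lt hy.2).exists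
  obtain ⟨x, -, hx⟩ := intermediate_value_uIcc (continuous_cdf ν).continuousOn
    (mem_uIcc.2 (Or.inl ⟨ha.le, hb.le⟩))
  exact ⟨x, hx⟩

lemma cdf_neg {ν : Measure ℝ} [IsProbabilityMeasure ν] [NullSingletonClass ν]
    (hν : ν.map (fun x ↦ -x) = ν) (x : ℝ) : cdf ν (-x) = 1 - cdf ν x := by
  have hpre : (fun y : ℝ ↦ -y) ⁻¹' Iic (-x) = Ici x := by ext; simp
  rw [cdf_eq_real, cdf_eq_real, ← hν, map_measureReal_apply measurable_neg measurableSet_Iic,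
    hpre, hν, ← compl_Iio, probReal_compl_eq_one_sub measurableSet_Iio,
    measureReal_congr Iio_ae_eq_Iic]

lemma cdf_gaussianReal (m : ℝ) (v : ℝ≥0) (x : ℝ) :
    cdf (gaussianReal m v) x = cdf (gaussianReal 0 v) (x - m) := by
  have hshift : (gaussianReal 0 v).map (· + m) = gaussianReal m v := by
    simpa using gaussianReal_map_add_const (μ := 0) (v := v) m
  rw [cdf_eq_real, cdf_eq_real, ← hshift,
    map_measureReal_apply (measurable_add_const m) measurableSet_Iic, preimage_add_const_Iic]

lemma Phi_neg (x : ℝ) : Phi (-x) = 1 - Phi x :=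
  haveI := nullSingletonClass_gaussianReal (μ := 0) one_ne_zero
  cdf_neg (by simpa using gaussianReal_map_neg (μ := 0) (v := 1)) x

lemma Phi_PhiInv {y : ℝ} (hy : y ∈ Ioo (0 : ℝ) 1) : Phi (PhiInv y) = y :=
  haveI := nullSingletonClass_gaussianReal (μ := 0) one_ne_zero
  Function.invFun_eq (exists_cdf_eq _ hy)

lemma gaussianReal_Iic_toReal (m τ : ℝ) : (gaussianReal m 1 (Iic τ)).toReal = Phi (τ - m) := by
  rw [← measureReal_def, ← cdf_eq_real, cdf_gaussianReal, Phi]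

theorem stmt3 (μ : ℝ) (hμ : 0 ≤ μ) (α : ℝ) (hα : α ∈ Ioo (0:ℝ) 1)
    (P Q : Measure ℝ) (hP : P = gaussianReal 0 1) (hQ : Q = gaussianReal μ 1) :
    (∀ E : Set ℝ, MeasurableSet E → (Q E).toReal ≤ α →
      (P E).toReal ≤ 1 - Phi (PhiInv (1 - α) - μ)) ∧
    blowUp P Q α = 1 - Phi (PhiInv (1 - α) - μ) ∧
    (∃ τ : ℝ, (Q (Iic τ)).toReal ≤ α ∧
      (P (Iic τ)).toReal = 1 - Phi (PhiInv (1 - α) - μ)) := by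
  subst hP hQ
  set t := PhiInv (1 - α)
  have ht : Phi t = 1 - α := Phi_PhiInv ⟨by linarith [hα.2], by linarith [hα.1]⟩
  set τ := μ - t
  have hQτ : (gaussianReal μ 1 (Iic τ)).toReal = α := by
    rw [gaussianReal_Iic_toReal, show τ - μ = -t by ring, Phi_neg, ht, sub_sub_cancel]
  have hPτ : (gaussianReal 0 1 (Iic τ)).toReal = 1 - Phi (t - μ) := by
    rw [gaussianReal_Iic_toReal, show τ - 0 = -(t - μ) by ring, Phi_neg]
  have bound (E : Set ℝ) (hE : MeasurableSet E) (hQE : (gaussianReal μ 1 E).toReal ≤ α) :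
      (gaussianReal 0 1 E).toReal ≤ 1 - Phi (t - μ) := by
    rw [← hQτ, ENNReal.toReal_le_toReal (measure_ne_top _ _) (measure_ne_top _ _)] at hQE
    rw [← hPτ, ENNReal.toReal_le_toReal (measure_ne_top _ _) (measure_ne_top _ _)]
    exact gaussianReal_le_gaussianReal_Iic hμ one_ne_zero τ hE hQE
  have greatest : IsGreatest {x : ℝ | ∃ E : Set ℝ, MeasurableSet E ∧
      (gaussianReal μ 1 E).toReal ≤ α ∧ x = (gaussianReal 0 1 E).toReal} (1 - Phi (t - μ)) :=
    ⟨⟨Iic τ, measurableSet_Iic, hQτ.le, hPτ.symm⟩,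
      by rintro _ ⟨E, hE, hQE, rfl⟩; exact bound E hE hQE⟩
  exact ⟨bound, greatest.csSup_eq, τ, hQτ.le, hPτ⟩
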